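/- For each β ∈ {★32, 3★2, 32★, ★21, 2★1, 21★}, under the bidirectional replacement 123 ↔ β all identity permutations of length at least 4 are equivalent to one another: id_m ≡ id_n for all m, n ≥ 4. -/

import Mathlib

/-!
Pattern-replacement equivalences between permutations of different lengths
(arXiv:1309.4802). A ★-pattern is encoded as a `List (Option ℕ)`, where `none`
is the placeholder ★ and `some k` an integer entry.
-/

/-- A ★-pattern / star-string entry: `none` is ★, `some k` an integer `k`. -/
abbrev SPat := List (Option ℕ)

/-- The integer entries of a star-string, in order. -/
def ints (ρ : SPat) : List ℕ := ρ.filterMap id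

/-- Two lists of naturals are order-isomorphic. -/
def OrdIso (u v : List ℕ) : Prop :=
  u.length = v.length ∧
  ∀ i j, i < u.length → j < u.length → (u.getD i 0 < u.getD j 0 ↔ v.getD i 0 < v.getD j 0)

/-- A valid string of distinct positive integers and ★'s. -/
def StarStr (ρ : SPat) : Prop := (ints ρ).Nodup ∧ ∀ k ∈ ints ρ, 0 < k

/-- `r` (entry by entry) forms a copy of the ★-pattern `δ`: ★'s in the same
positions, and the integer entries order-isomorphic. -/
def IsCopy (r δ : SPat) : Prop :=
  r.length = δ.length ∧
  (∀ i, (r.getD i none = none ↔ δ.getD i none = none)) ∧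
  OrdIso (ints r) (ints δ)

/-- `Repl a b ρ₁ ρ₂` : `ρ₂` is obtained from `ρ₁` by replacing an occurrence of `a`
as a (not necessarily contiguous) substring of `ρ₁` by `b`, entry by entry at the
same positions. -/
inductive Repl : SPat → SPat → SPat → SPat → Prop
  | nil : Repl [] [] [] []
  | keep {a b ρ₁ ρ₂} (x : Option ℕ) : Repl a b ρ₁ ρ₂ → Repl a b (x :: ρ₁) (x :: ρ₂)
  | repl {a b ρ₁ ρ₂} (x y : Option ℕ) :
      Repl a b ρ₁ ρ₂ → Repl (x :: a) (y :: b) (x :: ρ₁) (y :: ρ₂)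

/-- `π` is a permutation of `1, …, n` (as a list). -/
def IsPermList (π : List ℕ) : Prop := π.Perm (List.range' 1 π.length)

/-- `σ` is a result of the replacement `α → β` applied to the permutation `π`:
(1) `ρ₁` is `π` renumbered (order-isomorphically) with ★'s inserted anywhere;
(2) a substring `a` of `ρ₁` forming a copy of `α` is replaced (in place) by a
string `b` that is a copy of `β`, whose integers meet `ρ₁` only inside `a`, and
which agrees with `a` on the integer entries common to `α` and `β`;
(3) dropping ★'s and renumbering gives the permutation `σ`. -/
def IsResult (α β : SPat) (π σ : List ℕ) : Prop :=
  ∃ ρ₁ ρ₂ a b : SPat,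
    StarStr ρ₁ ∧ OrdIso π (ints ρ₁) ∧
    IsCopy a α ∧
    StarStr b ∧ IsCopy b β ∧
    (∀ k ∈ ints b, k ∈ ints ρ₁ → k ∈ ints a) ∧
    (∀ i j x, α.getD i none = some x → β.getD j none = some x →
      a.getD i none = b.getD j none) ∧
    Repl a b ρ₁ ρ₂ ∧
    IsPermList σ ∧ OrdIso (ints ρ₂) σ

/-- Equivalence under the bidirectional replacement `α ↔ β`: a finite sequence
of `α → β` and `β → α` replacements. -/
def PermEquiv (α β : SPat) (π σ : List ℕ) : Prop :=
  Relation.ReflTransGen (fun τ υ => IsResult α β τ υ ∨ IsResult β α τ υ) π σ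

/-- `π` is isolated under `α ↔ β`: no other permutation is equivalent to it. -/
def Isolated (α β : SPat) (π : List ℕ) : Prop :=
  ∀ σ : List ℕ, IsPermList σ → PermEquiv α β π σ → σ = π

/-- The identity permutation `1 2 ⋯ n`. -/
def idPerm (n : ℕ) : List ℕ := List.range' 1 n

/-- The reverse identity permutation `n (n-1) ⋯ 1`. -/
def ridPerm (n : ℕ) : List ℕ := (List.range' 1 n).reverse

def pat123 : SPat := [some 1, some 2, some 3]
def pat132 : SPat := [some 1, some 3, some 2]
def patS32 : SPat := [none, some 3, some 2]
def pat3S2 : SPat := [some 3, none, some 2]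
def pat32S : SPat := [some 3, some 2, none]
def patS31 : SPat := [none, some 3, some 1]
def pat3S1 : SPat := [some 3, none, some 1]
def pat31S : SPat := [some 3, some 1, none]
def patS21 : SPat := [none, some 2, some 1]
def pat2S1 : SPat := [some 2, none, some 1]
def pat21S : SPat := [some 2, some 1, none]
def pat12S : SPat := [some 1, some 2, none]
def pat1S3 : SPat := [some 1, none, some 3]
def patS23 : SPat := [none, some 2, some 3]
def patS12 : SPat := [none, some 1, some 2]
def pat23S : SPat := [some 2, some 3, none]
def pat13S : SPat := [some 1, some 3, none]
def pat1S2 : SPat := [some 1, none, some 2]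

/-!
A replacement can be undone (exchange the roles of `ρ₁, a` and `ρ₂, b`), so `≡` is symmetric on
permutations. For each `β`, three explicit replacements lead from `id₄ = 1234` to `id₅ = 12345`.
Appending the increasing run `k+1 ⋯ k+m` to both sides of a replacement keeps it valid, since the
run lies above every entry involved; so the same chain connects `id_{4+m}` and `id_{5+m}`, and
these links chain together to `id_m ≡ id_n`.
-/

theorem ints_append (u v : SPat) : ints (u ++ v) = ints u ++ ints v :=
  List.filterMap_append

theorem ints_append_map_some (ρ : SPat) (l : List ℕ) : ints (ρ ++ l.map some) = ints ρ ++ l := by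
  simp [ints, List.filterMap_map]

theorem ordIso_iff_zip {u v : List ℕ} :
    OrdIso u v ↔ u.length = v.length ∧ ∀ p ∈ u.zip v, ∀ q ∈ u.zip v, (p.1 < q.1 ↔ p.2 < q.2) := by
  refine and_congr_right fun hl => ?_
  simp only [List.mem_iff_getElem, List.length_zip, hl, min_self, List.getElem_zip]
  constructor
  · rintro h _ ⟨i, hi, rfl⟩ _ ⟨j, hj, rfl⟩
    simpa [List.getD_eq_getElem, hi, hj, hl] using h i j (hl ▸ hi) (hl ▸ hj)
  · intro h i j hi hj
    simpa [List.getD_eq_getElem, hi, hj, hl] using h _ ⟨i, hl ▸ hi, rfl⟩ _ ⟨j, hl ▸ hj, rfl⟩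

theorem OrdIso.symm {u v : List ℕ} (h : OrdIso u v) : OrdIso v u :=
  ⟨h.1.symm, fun i j hi hj => (h.2 i j (h.1 ▸ hi) (h.1 ▸ hj)).symm⟩

theorem mem_zip_range' {s t m : ℕ} {p : ℕ × ℕ} (hp : p ∈ (List.range' s m).zip (List.range' t m)) :
    s ≤ p.1 ∧ t ≤ p.2 ∧ p.1 + t = p.2 + s := by
  obtain ⟨i, hi, rfl⟩ := List.mem_iff_getElem.mp hp
  simp only [List.getElem_zip, List.getElem_range']
  omega

theorem OrdIso.append_range' {u v : List ℕ} {s t : ℕ} (h : OrdIso u v) (hu : ∀ x ∈ u, x < s)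
    (hv : ∀ x ∈ v, x < t) (m : ℕ) : OrdIso (u ++ List.range' s m) (v ++ List.range' t m) := by
  obtain ⟨hl, h⟩ := ordIso_iff_zip.mp h
  refine ordIso_iff_zip.mpr ⟨by simp [hl], ?_⟩
  have below {p : ℕ × ℕ} (hp : p ∈ u.zip v) : p.1 < s ∧ p.2 < t :=
    ⟨hu _ (List.of_mem_zip hp).1, hv _ (List.of_mem_zip hp).2⟩
  simp only [List.zip_append hl, List.mem_append]
  rintro p (hp | hp) q (hq | hq)
  · exact h p hp q hq
  · have := below hp; have := mem_zip_range' hq; omega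
  · have := mem_zip_range' hp; have := below hq; omega
  · have := mem_zip_range' hp; have := mem_zip_range' hq; omega

theorem isCopy_iff_zip {r δ : SPat} :
    IsCopy r δ ↔ r.length = δ.length ∧ (∀ p ∈ r.zip δ, (p.1 = none ↔ p.2 = none)) ∧
      OrdIso (ints r) (ints δ) := by
  refine and_congr_right fun hl => and_congr_left fun _ => ?_
  simp only [List.mem_iff_getElem, List.length_zip, hl, min_self, List.getElem_zip]
  constructor
  · rintro h _ ⟨i, hi, rfl⟩
    simpa [List.getD_eq_getElem, hi, hl] using h i
  · intro h i
    by_cases hi : i < δ.length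
    · simpa [List.getD_eq_getElem, hi, hl] using h _ ⟨i, hi, rfl⟩
    · simp [not_lt.mp hi, hl]

instance (u v : List ℕ) : Decidable (OrdIso u v) := decidable_of_iff _ ordIso_iff_zip.symm

instance (r δ : SPat) : Decidable (IsCopy r δ) := decidable_of_iff _ isCopy_iff_zip.symm

instance : DecidablePred StarStr := fun _ => inferInstanceAs (Decidable (_ ∧ _))

instance : DecidablePred IsPermList := fun _ => inferInstanceAs (Decidable (List.Perm _ _))

namespace Repl

variable {a b ρ₁ ρ₂ : SPat}

theorem symm (h : Repl a b ρ₁ ρ₂) : Repl b a ρ₂ ρ₁ := by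
  induction h with
  | nil => exact nil
  | keep x _ ih => exact ih.keep x
  | repl x y _ ih => exact ih.repl y x

theorem refl (ρ : SPat) : Repl [] [] ρ ρ := by
  induction ρ with
  | nil => exact nil
  | cons x _ ih => exact ih.keep x

theorem append_right (h : Repl a b ρ₁ ρ₂) (τ : SPat) : Repl a b (ρ₁ ++ τ) (ρ₂ ++ τ) := by
  induction h with
  | nil => exact refl τ
  | keep x _ ih => exact ih.keep x
  | repl x y _ ih => exact ih.repl x y

theorem exists_perm (h : Repl a b ρ₁ ρ₂) : ∃ c, ρ₁.Perm (a ++ c) ∧ ρ₂.Perm (b ++ c) := by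
  induction h with
  | nil => exact ⟨[], .nil, .nil⟩
  | keep x _ ih =>
    obtain ⟨c, h₁, h₂⟩ := ih
    exact ⟨x :: c, (h₁.cons x).trans List.perm_middle.symm, (h₂.cons x).trans List.perm_middle.symm⟩
  | repl x y _ ih =>
    obtain ⟨c, h₁, h₂⟩ := ih
    exact ⟨c, h₁.cons x, h₂.cons y⟩

theorem exists_ints_perm (h : Repl a b ρ₁ ρ₂) :
    ∃ c, (ints ρ₁).Perm (ints a ++ c) ∧ (ints ρ₂).Perm (ints b ++ c) := by
  obtain ⟨c, h₁, h₂⟩ := h.exists_perm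
  refine ⟨ints c, ?_, ?_⟩ <;> rw [← ints_append]
  exacts [h₁.filterMap id, h₂.filterMap id]

theorem mem_ints_right (h : Repl a b ρ₁ ρ₂) {k : ℕ} (hk : k ∈ ints ρ₂) :
    k ∈ ints b ∨ k ∈ ints ρ₁ := by
  obtain ⟨c, h₁, h₂⟩ := h.exists_ints_perm
  rcases List.mem_append.mp (h₂.mem_iff.mp hk) with hb | hc
  · exact .inl hb
  · exact .inr (h₁.mem_iff.mpr (List.mem_append_right _ hc))

theorem mem_ints_of_mem_left (h : Repl a b ρ₁ ρ₂) (h₁ : (ints ρ₁).Nodup) {k : ℕ}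
    (hka : k ∈ ints a) (hk₂ : k ∈ ints ρ₂) : k ∈ ints b := by
  obtain ⟨c, hρ₁, hρ₂⟩ := h.exists_ints_perm
  obtain ⟨-, -, hac⟩ := List.nodup_append.mp (hρ₁.nodup_iff.mp h₁)
  exact (List.mem_append.mp (hρ₂.mem_iff.mp hk₂)).resolve_right fun hkc => hac k hka k hkc rfl

end Repl

namespace StarStr

variable {a b ρ₁ ρ₂ : SPat}

theorem of_repl_left (h : Repl a b ρ₁ ρ₂) (h₁ : StarStr ρ₁) : StarStr a := by
  obtain ⟨c, hρ₁, -⟩ := h.exists_ints_perm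
  have hsub : ∀ k ∈ ints a, k ∈ ints ρ₁ := fun k hk => hρ₁.mem_iff.mpr (List.mem_append_left _ hk)
  exact ⟨(List.nodup_append.mp (hρ₁.nodup_iff.mp h₁.1)).1, fun k hk => h₁.2 k (hsub k hk)⟩

theorem of_repl_right (h : Repl a b ρ₁ ρ₂) (h₁ : StarStr ρ₁) (hb : StarStr b)
    (hsep : ∀ k ∈ ints b, k ∈ ints ρ₁ → k ∈ ints a) : StarStr ρ₂ := by
  obtain ⟨c, hρ₁, hρ₂⟩ := h.exists_ints_perm
  obtain ⟨-, hc, hac⟩ := List.nodup_append.mp (hρ₁.nodup_iff.mp h₁.1)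
  refine ⟨hρ₂.nodup_iff.mpr (hb.1.append hc fun k hkb hkc => ?_), fun k hk => ?_⟩
  · exact hac k (hsep k hkb (hρ₁.mem_iff.mpr (List.mem_append_right _ hkc))) k hkc rfl
  · rcases h.mem_ints_right hk with hkb | hk₁
    exacts [hb.2 k hkb, h₁.2 k hk₁]

theorem append_range' {s : ℕ} (h : StarStr ρ₁) (hs : ∀ x ∈ ints ρ₁, x < s)
    (hs₀ : 0 < s) (m : ℕ) : StarStr (ρ₁ ++ (List.range' s m).map some) := by
  rw [StarStr, ints_append_map_some]
  refine ⟨h.1.append List.nodup_range' fun x hx hx' => ?_, fun x hx => ?_⟩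
  · have := hs x hx; have := List.mem_range'_1.mp hx'; omega
  · rcases List.mem_append.mp hx with hx | hx
    · exact h.2 x hx
    · have := List.mem_range'_1.mp hx; omega

end StarStr

theorem IsPermList.lt_length_add_one {π : List ℕ} (h : IsPermList π) {x : ℕ} (hx : x ∈ π) :
    x < π.length + 1 := by
  have := List.mem_range'_1.mp (h.mem_iff.mp hx)
  omega

theorem IsPermList.append_range' {π : List ℕ} (h : IsPermList π) (m : ℕ) :
    IsPermList (π ++ List.range' (π.length + 1) m) := by
  have hsplit := List.range'_append (s := 1) (m := π.length) (n := m) (step := 1)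
  rw [IsPermList, List.length_append, List.length_range', ← hsplit, Nat.one_mul, Nat.add_comm 1]
  exact h.append_right _

namespace IsResult

variable {α β : SPat} {π σ : List ℕ}

theorem isPermList (h : IsResult α β π σ) : IsPermList σ := by
  obtain ⟨-, -, -, -, -, -, -, -, -, -, -, -, hσ, -⟩ := h
  exact hσ

theorem symm (hπ : IsPermList π) (h : IsResult α β π σ) : IsResult β α σ π := by
  obtain ⟨ρ₁, ρ₂, a, b, h₁, hπρ₁, ha, hb, hbβ, hsep, hagree, hr, hσ, hρ₂σ⟩ := h
  exact ⟨ρ₂, ρ₁, b, a, .of_repl_right hr h₁ hb hsep, hρ₂σ.symm, hbβ, .of_repl_left hr h₁, ha,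
    fun k hka hk₂ => hr.mem_ints_of_mem_left h₁.1 hka hk₂,
    fun i j x hi hj => (hagree j i x hj hi).symm, hr.symm, hπ, hπρ₁.symm⟩

theorem append_range' (hπ : IsPermList π) (h : IsResult α β π σ) (m : ℕ) :
    IsResult α β (π ++ List.range' (π.length + 1) m) (σ ++ List.range' (σ.length + 1) m) := by
  obtain ⟨ρ₁, ρ₂, a, b, h₁, hπρ₁, ha, hb, hbβ, hsep, hagree, hr, hσ, hρ₂σ⟩ := h
  set s := (ints ρ₁ ++ ints b).sum + 1
  have hs₁ (x : ℕ) (hx : x ∈ ints ρ₁) : x < s :=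
    Nat.lt_succ_of_le (List.le_sum_of_mem (List.mem_append_left _ hx))
  have hsb (x : ℕ) (hx : x ∈ ints b) : x < s :=
    Nat.lt_succ_of_le (List.le_sum_of_mem (List.mem_append_right _ hx))
  have hs₂ (x : ℕ) (hx : x ∈ ints ρ₂) : x < s := (hr.mem_ints_right hx).elim (hsb x) (hs₁ x)
  refine ⟨ρ₁ ++ (List.range' s m).map some, ρ₂ ++ (List.range' s m).map some, a, b,
    h₁.append_range' hs₁ (Nat.succ_pos _) m, ?_, ha, hb, hbβ, fun k hkb hk => ?_, hagree,
    hr.append_right _, hσ.append_range' m, ?_⟩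
  · rw [ints_append_map_some]
    exact hπρ₁.append_range' (fun x => hπ.lt_length_add_one) hs₁ m
  · rw [ints_append_map_some, List.mem_append] at hk
    refine hk.elim (hsep k hkb) fun hk => ?_
    have := hsb k hkb; have := List.mem_range'_1.mp hk; omega
  · rw [ints_append_map_some]
    exact hρ₂σ.append_range' hs₂ (fun x => hσ.lt_length_add_one) m

-- The `Repl` witness fixes `ρ₁, ρ₂, a, b`; all remaining conditions are decidable.
theorem of_repl {a b ρ₁ ρ₂ : SPat} (hr : Repl a b ρ₁ ρ₂)
    (h : StarStr ρ₁ ∧ OrdIso π (ints ρ₁) ∧ IsCopy a α ∧ StarStr b ∧ IsCopy b β ∧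
      (∀ k ∈ ints b, k ∈ ints ρ₁ → k ∈ ints a) ∧
      (∀ i < α.length, ∀ j < β.length, α.getD i none ≠ none →
        α.getD i none = β.getD j none → a.getD i none = b.getD j none) ∧
      IsPermList σ ∧ OrdIso (ints ρ₂) σ) :
    IsResult α β π σ := by
  obtain ⟨h₁, hπ, ha, hb, hbβ, hsep, hagree, hσ, hρ₂⟩ := h
  refine ⟨ρ₁, ρ₂, a, b, h₁, hπ, ha, hb, hbβ, hsep, fun i j x hi hj => ?_, hr, hσ, hρ₂⟩
  have lt_of_getD_eq_some {l : SPat} {n : ℕ} (hn : l.getD n none = some x) : n < l.length :=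
    not_le.mp fun hle => by rw [List.getD_eq_default _ _ hle] at hn; cases hn
  exact hagree i (lt_of_getD_eq_some hi) j (lt_of_getD_eq_some hj) (by rw [hi]; simp)
    (hi.trans hj.symm)

end IsResult

theorem isPermList_idPerm (n : ℕ) : IsPermList (idPerm n) := by
  rw [IsPermList, idPerm, List.length_range']

theorem length_idPerm (n : ℕ) : (idPerm n).length = n :=
  List.length_range'

theorem idPerm_append_range' (k m : ℕ) : idPerm k ++ List.range' (k + 1) m = idPerm (k + m) := by
  rw [idPerm, idPerm, ← List.range'_append, Nat.one_mul, Nat.add_comm 1]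

namespace PermEquiv

variable {α β : SPat} {π σ : List ℕ}

theorem isPermList (hπ : IsPermList π) (h : PermEquiv α β π σ) : IsPermList σ := by
  induction h with
  | refl => exact hπ
  | tail _ hτυ _ => exact hτυ.elim IsResult.isPermList IsResult.isPermList

theorem symm (hπ : IsPermList π) (h : PermEquiv α β π σ) : PermEquiv α β σ π := by
  induction h with
  | refl => exact .refl
  | tail hπτ hτυ ih =>
    have hτ := isPermList hπ hπτ
    exact .head (hτυ.symm.imp (·.symm hτ) (·.symm hτ)) ih

theorem append_range' (hπ : IsPermList π) (h : PermEquiv α β π σ) (m : ℕ) :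
    PermEquiv α β (π ++ List.range' (π.length + 1) m) (σ ++ List.range' (σ.length + 1) m) := by
  induction h with
  | refl => exact .refl
  | tail hπτ hτυ ih =>
    have hτ := isPermList hπ hπτ
    exact ih.tail (hτυ.imp (·.append_range' hτ m) (·.append_range' hτ m))

theorem idPerm_add {k l : ℕ} (h : PermEquiv α β (idPerm k) (idPerm l)) (m : ℕ) :
    PermEquiv α β (idPerm (k + m)) (idPerm (l + m)) := by
  simpa only [length_idPerm, idPerm_append_range'] using
    h.append_range' (isPermList_idPerm k) m

theorem idPerm_of_succ {k m n : ℕ} (h : PermEquiv α β (idPerm k) (idPerm (k + 1)))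
    (hkm : k ≤ m) (hmn : m ≤ n) : PermEquiv α β (idPerm m) (idPerm n) := by
  induction n, hmn using Nat.le_induction with
  | base => exact .refl
  | succ n hmn ih =>
    have hstep := h.idPerm_add (n - k)
    rw [Nat.add_right_comm, Nat.add_sub_of_le (hkm.trans hmn)] at hstep
    exact ih.trans hstep

end PermEquiv

theorem permEquiv_idPerm_four_five_patS32 : PermEquiv pat123 patS32 (idPerm 4) (idPerm 5) := by
  have h₁ : IsResult pat123 patS32 [1, 2, 3, 4] [1, 3, 2] := .of_repl
    (.keep (some 1) <| .repl (some 2) none <| .repl (some 3) (some 4) <| .repl (some 4) (some 3) .nil)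
    (by decide)
  have h₂ : IsResult patS32 pat123 [1, 3, 2] [2, 1, 3, 4] := .of_repl
    (.repl none (some 2) <| .keep (some 1) <| .repl (some 4) (some 3) <| .repl (some 3) (some 4) .nil)
    (by decide)
  have h₃ : IsResult patS32 pat123 [2, 1, 3, 4] [1, 2, 3, 4, 5] := .of_repl
    (.repl none (some 1) <| .repl (some 3) (some 2) <| .repl (some 2) (some 3) <| .keep (some 4) <|
      .keep (some 5) .nil)
    (by decide)
  exact .head (.inl h₁) <| .head (.inr h₂) <| .single (.inr h₃)

theorem permEquiv_idPerm_four_five_pat3S2 : PermEquiv pat123 pat3S2 (idPerm 4) (idPerm 5) := by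
  have h₁ : IsResult pat123 pat3S2 [1, 2, 3, 4] [3, 1, 2] := .of_repl
    (.repl (some 1) (some 4) <| .keep (some 2) <| .repl (some 3) none <| .repl (some 4) (some 3) .nil)
    (by decide)
  have h₂ : IsResult pat3S2 pat123 [3, 1, 2] [1, 2, 4, 3] := .of_repl
    (.repl (some 4) (some 1) <| .repl none (some 2) <| .repl (some 2) (some 4) <| .keep (some 3) .nil)
    (by decide)
  have h₃ : IsResult pat3S2 pat123 [1, 2, 4, 3] [1, 2, 3, 4, 5] := .of_repl
    (.keep (some 1) <| .keep (some 2) <| .repl (some 5) (some 3) <| .repl none (some 4) <|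
      .repl (some 4) (some 5) .nil)
    (by decide)
  exact .head (.inl h₁) <| .head (.inr h₂) <| .single (.inr h₃)

theorem permEquiv_idPerm_four_five_pat32S : PermEquiv pat123 pat32S (idPerm 4) (idPerm 5) := by
  have h₁ : IsResult pat123 pat32S [1, 2, 3, 4] [3, 1, 2] := .of_repl
    (.repl (some 1) (some 4) <| .keep (some 2) <| .repl (some 3) (some 3) <| .repl (some 4) none .nil)
    (by decide)
  have h₂ : IsResult pat32S pat123 [3, 1, 2] [2, 1, 3, 4] := .of_repl
    (.repl (some 4) (some 2) <| .keep (some 1) <| .repl (some 3) (some 3) <| .repl none (some 4) .nil)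
    (by decide)
  have h₃ : IsResult pat32S pat123 [2, 1, 3, 4] [1, 2, 3, 4, 5] := .of_repl
    (.repl (some 3) (some 1) <| .repl (some 2) (some 2) <| .repl none (some 3) <| .keep (some 4) <|
      .keep (some 5) .nil)
    (by decide)
  exact .head (.inl h₁) <| .head (.inr h₂) <| .single (.inr h₃)

theorem permEquiv_idPerm_four_five_patS21 : PermEquiv pat123 patS21 (idPerm 4) (idPerm 5) := by
  have h₁ : IsResult pat123 patS21 [1, 2, 3, 4] [2, 3, 1] := .of_repl
    (.repl (some 1) none <| .repl (some 2) (some 2) <| .keep (some 3) <| .repl (some 4) (some 1) .nil)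
    (by decide)
  have h₂ : IsResult patS21 pat123 [2, 3, 1] [1, 2, 4, 3] := .of_repl
    (.repl none (some 1) <| .repl (some 2) (some 2) <| .keep (some 4) <| .repl (some 1) (some 3) .nil)
    (by decide)
  have h₃ : IsResult patS21 pat123 [1, 2, 4, 3] [1, 2, 3, 4, 5] := .of_repl
    (.keep (some 1) <| .keep (some 2) <| .repl none (some 3) <| .repl (some 4) (some 4) <|
      .repl (some 3) (some 5) .nil)
    (by decide)
  exact .head (.inl h₁) <| .head (.inr h₂) <| .single (.inr h₃)

theorem permEquiv_idPerm_four_five_pat2S1 : PermEquiv pat123 pat2S1 (idPerm 4) (idPerm 5) := by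
  have h₁ : IsResult pat123 pat2S1 [1, 2, 3, 4] [3, 2, 1] := .of_repl
    (.repl (some 1) (some 3) <| .keep (some 2) <| .repl (some 3) none <| .repl (some 4) (some 1) .nil)
    (by decide)
  have h₂ : IsResult pat2S1 pat123 [3, 2, 1] [1, 3, 2, 4] := .of_repl
    (.repl (some 3) (some 1) <| .repl none (some 3) <| .keep (some 2) <| .repl (some 1) (some 4) .nil)
    (by decide)
  have h₃ : IsResult pat2S1 pat123 [1, 3, 2, 4] [1, 2, 3, 4, 5] := .of_repl
    (.keep (some 1) <| .repl (some 3) (some 2) <| .repl none (some 3) <| .repl (some 2) (some 4) <|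
      .keep (some 5) .nil)
    (by decide)
  exact .head (.inl h₁) <| .head (.inr h₂) <| .single (.inr h₃)

theorem permEquiv_idPerm_four_five_pat21S : PermEquiv pat123 pat21S (idPerm 4) (idPerm 5) := by
  have h₁ : IsResult pat123 pat21S [1, 2, 3, 4] [2, 1, 3] := .of_repl
    (.repl (some 1) (some 2) <| .repl (some 2) (some 1) <| .keep (some 3) <| .repl (some 4) none .nil)
    (by decide)
  have h₂ : IsResult pat21S pat123 [2, 1, 3] [1, 2, 4, 3] := .of_repl
    (.repl (some 2) (some 1) <| .repl (some 1) (some 2) <| .keep (some 4) <| .repl none (some 3) .nil)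
    (by decide)
  have h₃ : IsResult pat21S pat123 [1, 2, 4, 3] [1, 2, 3, 4, 5] := .of_repl
    (.keep (some 1) <| .keep (some 2) <| .repl (some 4) (some 3) <| .repl (some 3) (some 4) <|
      .repl none (some 5) .nil)
    (by decide)
  exact .head (.inl h₁) <| .head (.inr h₂) <| .single (.inr h₃)

/-- for `β ∈ {★32, 3★2, 32★, ★21, 2★1, 21★}`, all identity
permutations of length at least 4 are equivalent under `123 ↔ β`. -/
theorem identities_equiv_32_21 :
    ∀ β ∈ ([patS32, pat3S2, pat32S, patS21, pat2S1, pat21S] : List SPat),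
    ∀ m n : ℕ, 4 ≤ m → 4 ≤ n → PermEquiv pat123 β (idPerm m) (idPerm n) := by
  intro β hβ m n hm hn
  have h₄₅ : PermEquiv pat123 β (idPerm 4) (idPerm 5) := by
    simp only [List.mem_cons, List.not_mem_nil, or_false] at hβ
    rcases hβ with rfl | rfl | rfl | rfl | rfl | rfl
    exacts [permEquiv_idPerm_four_five_patS32, permEquiv_idPerm_four_five_pat3S2,
      permEquiv_idPerm_four_five_pat32S, permEquiv_idPerm_four_five_patS21,
      permEquiv_idPerm_four_five_pat2S1, permEquiv_idPerm_four_five_pat21S]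
  rcases le_total m n with hmn | hnm
  · exact h₄₅.idPerm_of_succ hm hmn
  · exact (h₄₅.idPerm_of_succ hn hnm).symm (isPermList_idPerm n)
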